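/- arXiv:1903.03926 — 6 statements merged into one kernel-verified Lean document; each statement's English description precedes it below -/
import Mathlib

section
/- Let A and B be abelian categories and G : B → A an additive functor. Let X ⊆ A and Y ⊆ B be full subcategories containing the zero object, and let D_X^Y be the full subcategory of the comma category (G(B) ↓ A) consisting of objects g : G(B₀) → A₀ with B₀ ∈ Y and A₀ ∈ X. Then D_X^Y is covariantly finite in (G(B) ↓ A) if and only if X is covariantly finite in A and Y is covariantly finite in B. -/
open CategoryTheory CategoryTheory.Limits

section ApproximationDefs

variable {C : Type*} [Category C]

/-- `g : M ⟶ X` with `X ∈ P` is a left `P`-approximation of `M` if every morphism from `M`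
to an object of `P` factors through `g`. -/
def IsLeftApproximation (P : C → Prop) {M X : C} (g : M ⟶ X) : Prop :=
  P X ∧ ∀ (X' : C), P X' → ∀ h : M ⟶ X', ∃ t : X ⟶ X', g ≫ t = h

/-- A full subcategory (class of objects) `P` is covariantly finite if every object admits
a left `P`-approximation. -/
def CovariantlyFinite (P : C → Prop) : Prop :=
  ∀ M : C, ∃ (X : C) (g : M ⟶ X), IsLeftApproximation P g

end ApproximationDefs

/-! `A` is a retract of the comma category via `M ↦ (0 : G(Z) ⟶ M)` for a fixed `Z ∈ Y`, and
`B` via `M ↦ (0 : G(M) ⟶ Z)` for a fixed `Z ∈ X`; these retractions respect the subcategories, so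
they carry left `D_X^Y`-approximations to left `X`- and `Y`-approximations. Conversely, for
`g : G(B₀) ⟶ A₀` take a left `Y`-approximation `y : B₀ ⟶ B₁`, push `g` out along `G(y)` and take
a left `X`-approximation `x : P ⟶ A₁` of the pushout; then `(y, inl ≫ x)` is a left approximation
of `g` by `G(B₁) ⟶ P ⟶ A₁`: a morphism from `g` into `D_X^Y` factors on the left through `y`,
then on the right through the universal property of `P`, then through `x`. -/

section Retract

variable {C D : Type*} [Category C] [Category D]

theorem CovariantlyFinite.of_retract {P : C → Prop} {Q : D → Prop} (ι : C ⥤ D) (π : D ⥤ C)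
    (e : ι ⋙ π ≅ 𝟭 C) (hι : ∀ M, P M → Q (ι.obj M)) (hπ : ∀ N, Q N → P (π.obj N))
    (hQ : CovariantlyFinite Q) : CovariantlyFinite P := by
  intro M
  obtain ⟨N, g, hN, hg⟩ := hQ (ι.obj M)
  refine ⟨π.obj N, e.inv.app M ≫ π.map g, hπ N hN, fun M' hM' h => ?_⟩
  obtain ⟨t, ht⟩ := hg _ (hι M' hM') (ι.map h)
  refine ⟨π.map t ≫ e.hom.app M', ?_⟩
  have hnat := e.inv.naturality h
  simp only [Functor.comp_map, Functor.id_map] at hnat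
  rw [Category.assoc, ← Category.assoc (π.map g), ← π.map_comp, ht, ← Category.assoc,
    ← hnat, Category.assoc, Iso.inv_hom_id_app, Category.comp_id]

end Retract

namespace CategoryTheory.Comma

variable {A B C : Type*} [Category A] [Category B] [Category C] {Y : B → Prop}

section ZeroMorphisms

variable [HasZeroMorphisms A] (L : B ⥤ A) (R : C ⥤ A) {X : C → Prop}

def constLeftZero (Z : B) : C ⥤ Comma L R where
  obj M := ⟨Z, M, 0⟩
  map h := ⟨𝟙 Z, h, by simp⟩

def constRightZero (Z : C) : B ⥤ Comma L R where
  obj M := ⟨M, Z, 0⟩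
  map h := ⟨h, 𝟙 Z, by simp⟩

variable {L R}

theorem covariantlyFinite_right_of_comma {Z : B} (hZ : Y Z)
    (hD : CovariantlyFinite (fun M : Comma L R => Y M.left ∧ X M.right)) :
    CovariantlyFinite X :=
  hD.of_retract (constLeftZero L R Z) (snd L R) (Iso.refl _) (fun _ hM => ⟨hZ, hM⟩)
    (fun _ hN => hN.2)

theorem covariantlyFinite_left_of_comma {Z : C} (hZ : X Z)
    (hD : CovariantlyFinite (fun M : Comma L R => Y M.left ∧ X M.right)) :
    CovariantlyFinite Y :=
  hD.of_retract (constRightZero L R Z) (fst L R) (Iso.refl _) (fun _ hM => ⟨hM, hZ⟩)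
    (fun _ hN => hN.1)

end ZeroMorphisms

section Pushout

variable [HasPushouts A] {L : B ⥤ A} {X : A → Prop}

@[simps]
noncomputable def homToPushoutExtension (M : Comma L (𝟭 A)) {B₁ : B} (y : M.left ⟶ B₁)
    {A₁ : A} (x : pushout M.hom (L.map y) ⟶ A₁) : M ⟶ ⟨B₁, A₁, pushout.inr _ _ ≫ x⟩ where
  left := y
  right := pushout.inl _ _ ≫ x
  w := by simp [← pushout.condition_assoc]

theorem isLeftApproximation_homToPushoutExtension {M : Comma L (𝟭 A)} {B₁ : B}
    {y : M.left ⟶ B₁} {A₁ : A} {x : pushout M.hom (L.map y) ⟶ A₁}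
    (hy : IsLeftApproximation Y y) (hx : IsLeftApproximation X x) :
    IsLeftApproximation (fun N : Comma L (𝟭 A) => Y N.left ∧ X N.right)
      (homToPushoutExtension M y x) := by
  refine ⟨⟨hy.1, hx.1⟩, fun N ⟨hNl, hNr⟩ h => ?_⟩
  obtain ⟨t, ht⟩ := hy.2 N.left hNl h.left
  have hsquare : M.hom ≫ h.right = L.map y ≫ L.map t ≫ N.hom := by
    rw [← L.map_comp_assoc, ht]
    simp [h.w]
  obtain ⟨u, hu⟩ := hx.2 N.right hNr (pushout.desc h.right (L.map t ≫ N.hom) hsquare)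
  refine ⟨⟨t, u, ?_⟩, Comma.hom_ext _ _ ht ?_⟩
  · simp [hu, pushout.inr_desc]
  · simp [hu, pushout.inl_desc]

theorem covariantlyFinite_comma (hX : CovariantlyFinite X) (hY : CovariantlyFinite Y) :
    CovariantlyFinite (fun N : Comma L (𝟭 A) => Y N.left ∧ X N.right) := by
  intro M
  obtain ⟨B₁, y, hy⟩ := hY M.left
  obtain ⟨A₁, x, hx⟩ := hX (pushout M.hom (L.map y))
  exact ⟨_, _, isLeftApproximation_homToPushoutExtension hy hx⟩

end Pushout

end CategoryTheory.Comma

theorem covariantly_finite_comma_iff_general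
    {A B : Type*} [Category A] [Category B] [Abelian A]
    (G : B ⥤ A)
    (X : A → Prop) (Y : B → Prop)
    (hX0 : ∃ Z : A, IsZero Z ∧ X Z) (hY0 : ∃ Z : B, IsZero Z ∧ Y Z) :
    CovariantlyFinite (fun Z : Comma G (𝟭 A) => Y Z.left ∧ X Z.right) ↔
      (CovariantlyFinite X ∧ CovariantlyFinite Y) := by
  obtain ⟨ZA, -, hZA⟩ := hX0
  obtain ⟨ZB, -, hZB⟩ := hY0
  exact ⟨fun hD => ⟨Comma.covariantlyFinite_right_of_comma hZB hD,
      Comma.covariantlyFinite_left_of_comma hZA hD⟩,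
    fun ⟨hX, hY⟩ => Comma.covariantlyFinite_comma hX hY⟩

/-- Let `A`, `B` be abelian categories, `G : B ⥤ A` an additive functor,
`X ⊆ A`, `Y ⊆ B` full subcategories containing the zero object, and `D_X^Y` the full
subcategory of the comma category `(G(B) ↓ A)` of objects `g : G(B₀) ⟶ A₀` with
`B₀ ∈ Y`, `A₀ ∈ X`.  Then `D_X^Y` is covariantly finite in `(G(B) ↓ A)` if and only if
`X` is covariantly finite in `A` and `Y` is covariantly finite in `B`. -/
theorem covariantly_finite_comma_iff
    {A B : Type*} [Category A] [Category B] [Abelian A] [Abelian B]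
    (G : B ⥤ A) [G.Additive]
    (X : A → Prop) (Y : B → Prop)
    (hX0 : ∃ Z : A, IsZero Z ∧ X Z) (hY0 : ∃ Z : B, IsZero Z ∧ Y Z) :
    CovariantlyFinite (fun Z : Comma G (𝟭 A) => Y Z.left ∧ X Z.right) ↔
      (CovariantlyFinite X ∧ CovariantlyFinite Y) :=
  covariantly_finite_comma_iff_general G X Y hX0 hY0
end

section
/- Let A and B be abelian categories, F : A → B and G : B → A additive functors with G left adjoint to F. Let X ⊆ A and Y ⊆ B be full subcategories containing zero, and let C_X^Y be the full subcategory of the comma category (B ↓ F(A)) of objects f : B₀ → F(A₀) with B₀ ∈ Y, A₀ ∈ X. Then C_X^Y is functorially finite in (B ↓ F(A)) if and only if X is functorially finite in A and Y is functorially finite in B. -/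
/-!
An object `f : B₀ ⟶ F A₀` of the comma category is approximated componentwise.  For a left
approximation, first approximate `B₀` by `b : B₀ ⟶ Y₀`; the transpose `G B₀ ⟶ A₀` of `f` and
`G b` span a pushout in `A`, whose left `X`-approximation `x` completes the square, and the
universal properties of `b`, the pushout and `x` give the factorisations.  Right
approximations are dual, using a pullback in `B` and no adjunction.  Conversely, `A` and `B`
are retracts of the comma category by functors sending `M` to `0 : Z ⟶ F M` and `N` to
`0 : N ⟶ F Z` for fixed `Z ∈ Y`, resp. `Z ∈ X`, and approximations descend along retractions.
-/

open CategoryTheory CategoryTheory.Limits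

section ApproximationDefs

variable {C : Type*} [Category C]

/-- `g : X ⟶ M` with `X ∈ P` is a right `P`-approximation of `M`. -/
def IsRightApproximation (P : C → Prop) {X M : C} (g : X ⟶ M) : Prop :=
  P X ∧ ∀ (X' : C), P X' → ∀ h : X' ⟶ M, ∃ t : X' ⟶ X, t ≫ g = h

/-- `P` is contravariantly finite if every object admits a right `P`-approximation. -/
def ContravariantlyFinite (P : C → Prop) : Prop :=
  ∀ M : C, ∃ (X : C) (g : X ⟶ M), IsRightApproximation P g

/-- `P` is functorially finite if it is both covariantly and contravariantly finite. -/
def FunctoriallyFinite (P : C → Prop) : Prop :=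
  CovariantlyFinite P ∧ ContravariantlyFinite P

end ApproximationDefs

section Retract

variable {C D : Type*} [Category C] [Category D] {π : C ⥤ D} {σ : D ⥤ C}
  {P : C → Prop} {Q : D → Prop}

lemma CovariantlyFinite.of_retract_s10 (e : σ ⋙ π ≅ 𝟭 D) (hπ : ∀ c, P c → Q (π.obj c))
    (hσ : ∀ d, Q d → P (σ.obj d)) (hP : CovariantlyFinite P) : CovariantlyFinite Q := by
  intro M
  obtain ⟨W, g, hW, hg⟩ := hP (σ.obj M)
  refine ⟨π.obj W, e.inv.app M ≫ π.map g, hπ W hW, fun M' hM' h => ?_⟩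
  obtain ⟨t, ht⟩ := hg _ (hσ M' hM') (σ.map h)
  refine ⟨π.map t ≫ e.hom.app M', ?_⟩
  have hnat := e.hom.naturality h
  simp only [Functor.comp_map, Functor.id_map] at hnat
  simp only [Category.assoc, ← π.map_comp_assoc, ht, hnat, Iso.inv_hom_id_app_assoc,
    Functor.id_obj]

lemma ContravariantlyFinite.of_retract_s10 (e : σ ⋙ π ≅ 𝟭 D) (hπ : ∀ c, P c → Q (π.obj c))
    (hσ : ∀ d, Q d → P (σ.obj d)) (hP : ContravariantlyFinite P) : ContravariantlyFinite Q := by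
  intro M
  obtain ⟨W, g, hW, hg⟩ := hP (σ.obj M)
  refine ⟨π.obj W, π.map g ≫ e.hom.app M, hπ W hW, fun M' hM' h => ?_⟩
  obtain ⟨t, ht⟩ := hg _ (hσ M' hM') (σ.map h)
  refine ⟨e.inv.app M' ≫ π.map t, ?_⟩
  have hnat := e.hom.naturality h
  simp only [Functor.comp_map, Functor.id_map] at hnat
  simp only [Category.assoc, ← π.map_comp_assoc, ht, hnat, Iso.inv_hom_id_app_assoc,
    Functor.id_obj]

end Retract

section Comma

variable {A B : Type*} [Category A] [Category B] (F : A ⥤ B)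

section ZeroMorphisms

variable [HasZeroMorphisms B]

def commaOfRight (Z : B) : A ⥤ Comma (𝟭 B) F where
  obj M := ⟨Z, M, 0⟩
  map h := ⟨𝟙 Z, h, by simp⟩

def commaOfLeft (Z : A) : B ⥤ Comma (𝟭 B) F where
  obj N := ⟨N, Z, 0⟩
  map h := ⟨h, 𝟙 Z, by simp⟩

def commaOfRightCompSnd (Z : B) : commaOfRight F Z ⋙ Comma.snd (𝟭 B) F ≅ 𝟭 A :=
  Iso.refl _

def commaOfLeftCompFst (Z : A) : commaOfLeft F Z ⋙ Comma.fst (𝟭 B) F ≅ 𝟭 B :=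
  Iso.refl _

end ZeroMorphisms

variable {X : A → Prop} {Y : B → Prop}

lemma covariantlyFinite_comma [HasPushouts A] {G : B ⥤ A} (adj : G ⊣ F)
    (hX : CovariantlyFinite X) (hY : CovariantlyFinite Y) :
    CovariantlyFinite (fun Z : Comma (𝟭 B) F => Y Z.left ∧ X Z.right) := by
  intro Z
  obtain ⟨Y₀, b, hY₀, hb⟩ := hY Z.left
  let f := (adj.homEquiv _ _).symm Z.hom
  obtain ⟨X₀, x, hX₀, hx⟩ := hX (pushout f (G.map b))
  refine ⟨⟨Y₀, X₀, adj.homEquiv _ _ (pushout.inr _ _ ≫ x)⟩,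
    ⟨b, pushout.inl _ _ ≫ x, ?_⟩, ⟨hY₀, hX₀⟩, ?_⟩
  · show b ≫ adj.homEquiv _ _ (pushout.inr _ _ ≫ x) = Z.hom ≫ F.map (pushout.inl _ _ ≫ x)
    apply (adj.homEquiv _ _).symm.injective
    rw [Adjunction.homEquiv_naturality_left_symm, Equiv.symm_apply_apply,
      Adjunction.homEquiv_naturality_right_symm, ← pushout.condition_assoc]
    rfl
  · rintro W ⟨hWl, hWr⟩ h
    obtain ⟨s, hs⟩ := hb W.left hWl h.left
    have hsquare : f ≫ h.right = G.map b ≫ G.map s ≫ (adj.homEquiv _ _).symm W.hom := by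
      have hw := h.w
      simp only [Functor.id_map] at hw
      rw [← G.map_comp_assoc, hs, ← Adjunction.homEquiv_naturality_left_symm, hw,
        Adjunction.homEquiv_naturality_right_symm]
      rfl
    obtain ⟨t, ht⟩ :=
      hx W.right hWr (pushout.desc h.right (G.map s ≫ (adj.homEquiv _ _).symm W.hom) hsquare)
    refine ⟨⟨s, t, ?_⟩, CommaMorphism.ext hs ?_⟩
    · show s ≫ W.hom = adj.homEquiv _ _ (pushout.inr _ _ ≫ x) ≫ F.map t
      apply (adj.homEquiv _ _).symm.injective
      rw [Adjunction.homEquiv_naturality_left_symm, Adjunction.homEquiv_naturality_right_symm,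
        Equiv.symm_apply_apply, Category.assoc, ht, pushout.inr_desc]
    · show (pushout.inl _ _ ≫ x) ≫ t = h.right
      rw [Category.assoc, ht, pushout.inl_desc]

lemma contravariantlyFinite_comma [HasPullbacks B]
    (hX : ContravariantlyFinite X) (hY : ContravariantlyFinite Y) :
    ContravariantlyFinite (fun Z : Comma (𝟭 B) F => Y Z.left ∧ X Z.right) := by
  intro Z
  obtain ⟨X₀, a, hX₀, ha⟩ := hX Z.right
  obtain ⟨Y₀, y, hY₀, hy⟩ := hY (pullback Z.hom (F.map a))
  refine ⟨⟨Y₀, X₀, y ≫ pullback.snd _ _⟩, ⟨y ≫ pullback.fst _ _, a, ?_⟩, ⟨hY₀, hX₀⟩, ?_⟩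
  · show (y ≫ pullback.fst _ _) ≫ Z.hom = (y ≫ pullback.snd _ _) ≫ F.map a
    rw [Category.assoc, Category.assoc, pullback.condition]
  · rintro W ⟨hWl, hWr⟩ h
    obtain ⟨t, ht⟩ := ha W.right hWr h.right
    have hsquare : h.left ≫ Z.hom = (W.hom ≫ F.map t) ≫ F.map a := by
      have hw := h.w
      simp only [Functor.id_map] at hw
      rw [Category.assoc, ← F.map_comp, ht, hw]
    obtain ⟨s, hs⟩ := hy W.left hWl (pullback.lift h.left (W.hom ≫ F.map t) hsquare)
    refine ⟨⟨s, t, ?_⟩, CommaMorphism.ext ?_ ht⟩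
    · show s ≫ y ≫ pullback.snd _ _ = W.hom ≫ F.map t
      rw [← Category.assoc, hs, pullback.lift_snd]
    · show s ≫ y ≫ pullback.fst _ _ = h.left
      rw [← Category.assoc, hs, pullback.lift_fst]

end Comma

theorem functorially_finite_comma_iff_general
    {A B : Type*} [Category A] [Category B] [Abelian A] [Abelian B]
    (F : A ⥤ B) (G : B ⥤ A) (adj : G ⊣ F)
    (X : A → Prop) (Y : B → Prop)
    (hX0 : ∃ Z : A, IsZero Z ∧ X Z) (hY0 : ∃ Z : B, IsZero Z ∧ Y Z) :
    FunctoriallyFinite (fun Z : Comma (𝟭 B) F => Y Z.left ∧ X Z.right) ↔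
      (FunctoriallyFinite X ∧ FunctoriallyFinite Y) := by
  obtain ⟨ZX, -, hZX⟩ := hX0
  obtain ⟨ZY, -, hZY⟩ := hY0
  constructor
  · rintro ⟨hcov, hcontra⟩
    have eX := commaOfRightCompSnd F ZY
    have eY := commaOfLeftCompFst F ZX
    exact ⟨⟨hcov.of_retract_s10 eX (fun _ h => h.2) (fun _ hM => ⟨hZY, hM⟩),
        hcontra.of_retract_s10 eX (fun _ h => h.2) (fun _ hM => ⟨hZY, hM⟩)⟩,
      ⟨hcov.of_retract_s10 eY (fun _ h => h.1) (fun _ hN => ⟨hN, hZX⟩),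
        hcontra.of_retract_s10 eY (fun _ h => h.1) (fun _ hN => ⟨hN, hZX⟩)⟩⟩
  · rintro ⟨⟨hXcov, hXcontra⟩, ⟨hYcov, hYcontra⟩⟩
    exact ⟨covariantlyFinite_comma F adj hXcov hYcov,
      contravariantlyFinite_comma F hXcontra hYcontra⟩

/-- Let `A`, `B` be abelian categories, `F : A ⥤ B`, `G : B ⥤ A` additive
functors with `G` left adjoint to `F`; let `X ⊆ A`, `Y ⊆ B` be full subcategories
containing zero, and `C_X^Y` the full subcategory of the comma category `(B ↓ F(A))` of
objects `f : B₀ ⟶ F(A₀)` with `B₀ ∈ Y`, `A₀ ∈ X`.  Then `C_X^Y` is functorially finite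
in `(B ↓ F(A))` if and only if `X` and `Y` are functorially finite. -/
theorem functorially_finite_comma_iff
    {A B : Type*} [Category A] [Category B] [Abelian A] [Abelian B]
    (F : A ⥤ B) (G : B ⥤ A) [F.Additive] [G.Additive] (adj : G ⊣ F)
    (X : A → Prop) (Y : B → Prop)
    (hX0 : ∃ Z : A, IsZero Z ∧ X Z) (hY0 : ∃ Z : B, IsZero Z ∧ Y Z) :
    FunctoriallyFinite (fun Z : Comma (𝟭 B) F => Y Z.left ∧ X Z.right) ↔
      (FunctoriallyFinite X ∧ FunctoriallyFinite Y) :=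
  functorially_finite_comma_iff_general F G adj X Y hX0 hY0
end

section
/- Let A be an abelian category and X ⊆ A a full subcategory containing the zero object. Let maps(X) denote the full subcategory of the arrow category of A consisting of morphisms f : X₁ → X₂ with X₁, X₂ ∈ X. Then X is covariantly (respectively contravariantly, functorially) finite in A if and only if maps(X) is covariantly (respectively contravariantly, functorially) finite in the arrow category of A. -/
/-!
A left `maps(X)`-approximation of an arrow `f : M₁ ⟶ M₂` is built in two steps: take a left
`X`-approximation `g₁ : M₁ ⟶ X₁`, then a left `X`-approximation `q` of the pushout of `f`
and `g₁`; the square from `f` to `pushout.inr ≫ q` is the approximation, its universality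
coming from that of `g₁` and then of `q` applied to the map out of the pushout. Conversely, approximating
the identity arrow of `M` and taking the source component approximates `M`. Right
approximations are dual, with pullbacks.
-/

open CategoryTheory CategoryTheory.Limits

section Maps

variable {A : Type*} [Category A] (X : A → Prop)

theorem IsLeftApproximation.left_of_arrow {M : A} {b : Arrow A} {g : Arrow.mk (𝟙 M) ⟶ b}
    (hg : IsLeftApproximation (fun f : Arrow A => X f.left ∧ X f.right) g) :
    IsLeftApproximation X g.left := by
  refine ⟨hg.1.1, fun X' hX' h => ?_⟩
  obtain ⟨t, ht⟩ := hg.2 (Arrow.mk (𝟙 X')) ⟨hX', hX'⟩ (Arrow.homMk' h h)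
  exact ⟨t.left, congrArg CommaMorphism.left ht⟩

theorem IsRightApproximation.right_of_arrow {M : A} {b : Arrow A} {g : b ⟶ Arrow.mk (𝟙 M)}
    (hg : IsRightApproximation (fun f : Arrow A => X f.left ∧ X f.right) g) :
    IsRightApproximation X g.right := by
  refine ⟨hg.1.2, fun X' hX' h => ?_⟩
  obtain ⟨t, ht⟩ := hg.2 (Arrow.mk (𝟙 X')) ⟨hX', hX'⟩ (Arrow.homMk' h h)
  exact ⟨t.right, congrArg CommaMorphism.right ht⟩

theorem isLeftApproximation_pushout_square [HasPushouts A] {M : Arrow A} {X₁ X₂ : A}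
    {g₁ : M.left ⟶ X₁} (hg₁ : IsLeftApproximation X g₁)
    {q : pushout M.hom g₁ ⟶ X₂} (hq : IsLeftApproximation X q) :
    IsLeftApproximation (fun f : Arrow A => X f.left ∧ X f.right)
      (Arrow.homMk (u := g₁) (v := pushout.inl M.hom g₁ ≫ q)
        (by simp [← pushout.condition_assoc]) :
        M ⟶ Arrow.mk (pushout.inr M.hom g₁ ≫ q)) := by
  refine ⟨⟨hg₁.1, hq.1⟩, fun b hb h => ?_⟩
  obtain ⟨u₁, hu₁⟩ := hg₁.2 b.left hb.1 h.left
  obtain ⟨u₂, hu₂⟩ := hq.2 b.right hb.2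
    (pushout.desc h.right (u₁ ≫ b.hom) (by rw [← Arrow.w h, ← hu₁]; simp))
  exact ⟨Arrow.homMk u₁ u₂ (by simp [hu₂, pushout.inr_desc]),
    Arrow.hom_ext _ _ hu₁ (by simp [hu₂, pushout.inl_desc])⟩

theorem isRightApproximation_pullback_square [HasPullbacks A] {M : Arrow A} {X₁ X₂ : A}
    {g₂ : X₂ ⟶ M.right} (hg₂ : IsRightApproximation X g₂)
    {q : X₁ ⟶ pullback M.hom g₂} (hq : IsRightApproximation X q) :
    IsRightApproximation (fun f : Arrow A => X f.left ∧ X f.right)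
      (Arrow.homMk (u := q ≫ pullback.fst M.hom g₂) (v := g₂)
        (by simp [pullback.condition]) : Arrow.mk (q ≫ pullback.snd M.hom g₂) ⟶ M) := by
  refine ⟨⟨hq.1, hg₂.1⟩, fun b hb h => ?_⟩
  obtain ⟨u₂, hu₂⟩ := hg₂.2 b.right hb.2 h.right
  obtain ⟨u₁, hu₁⟩ := hq.2 b.left hb.1
    (pullback.lift h.left (b.hom ≫ u₂) (by rw [Category.assoc, hu₂, Arrow.w h]))
  exact ⟨Arrow.homMk u₁ u₂ (by simp [reassoc_of% hu₁, pullback.lift_snd]),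
    Arrow.hom_ext _ _ (by simp [reassoc_of% hu₁, pullback.lift_fst]) hu₂⟩

theorem covariantlyFinite_iff_arrow [HasPushouts A] :
    CovariantlyFinite X ↔ CovariantlyFinite (fun f : Arrow A => X f.left ∧ X f.right) := by
  refine ⟨fun hX M => ?_, fun hX M => ?_⟩
  · obtain ⟨X₁, g₁, hg₁⟩ := hX M.left
    obtain ⟨X₂, q, hq⟩ := hX (pushout M.hom g₁)
    exact ⟨_, _, isLeftApproximation_pushout_square X hg₁ hq⟩
  · obtain ⟨_, _, hg⟩ := hX (Arrow.mk (𝟙 M))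
    exact ⟨_, _, hg.left_of_arrow X⟩

theorem contravariantlyFinite_iff_arrow [HasPullbacks A] :
    ContravariantlyFinite X ↔
      ContravariantlyFinite (fun f : Arrow A => X f.left ∧ X f.right) := by
  refine ⟨fun hX M => ?_, fun hX M => ?_⟩
  · obtain ⟨X₂, g₂, hg₂⟩ := hX M.right
    obtain ⟨X₁, q, hq⟩ := hX (pullback M.hom g₂)
    exact ⟨_, _, isRightApproximation_pullback_square X hg₂ hq⟩
  · obtain ⟨_, _, hg⟩ := hX (Arrow.mk (𝟙 M))
    exact ⟨_, _, hg.right_of_arrow X⟩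

end Maps

theorem maps_functorially_finite_iff_general
    {A : Type*} [Category A] [Abelian A]
    (X : A → Prop) :
    (CovariantlyFinite X ↔
        CovariantlyFinite (fun f : Arrow A => X f.left ∧ X f.right)) ∧
    (ContravariantlyFinite X ↔
        ContravariantlyFinite (fun f : Arrow A => X f.left ∧ X f.right)) ∧
    (FunctoriallyFinite X ↔
        FunctoriallyFinite (fun f : Arrow A => X f.left ∧ X f.right)) := by
  have hcov := covariantlyFinite_iff_arrow X
  have hcontra := contravariantlyFinite_iff_arrow X
  exact ⟨hcov, hcontra, and_congr hcov hcontra⟩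

/-- Let `A` be an abelian category and `X ⊆ A` a full subcategory containing
the zero object.  Let `maps(X)` be the full subcategory of the arrow category of `A`
consisting of morphisms `f : X₁ ⟶ X₂` with `X₁, X₂ ∈ X`.  Then `X` is covariantly
(resp. contravariantly, functorially) finite in `A` if and only if `maps(X)` is
covariantly (resp. contravariantly, functorially) finite in the arrow category of `A`. -/
theorem maps_functorially_finite_iff
    {A : Type*} [Category A] [Abelian A]
    (X : A → Prop) (hX0 : ∃ Z : A, IsZero Z ∧ X Z) :
    (CovariantlyFinite X ↔
        CovariantlyFinite (fun f : Arrow A => X f.left ∧ X f.right)) ∧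
    (ContravariantlyFinite X ↔
        ContravariantlyFinite (fun f : Arrow A => X f.left ∧ X f.right)) ∧
    (FunctoriallyFinite X ↔
        FunctoriallyFinite (fun f : Arrow A => X f.left ∧ X f.right)) :=
  maps_functorially_finite_iff_general X
end

section
/- Let A be an abelian category with projective covers, and let f : M → N be a morphism in A with Coker(f) ≠ 0. Let α : P₀ → M be a projective cover of M, β : Q₀ → Coker(f) a projective cover of Coker(f), and β' : Q₀ → N a lift of β along the cokernel projection π : N → Coker(f). Then the morphism (α, (f∘α, β')) : (P₀, [1;0], P₀ ⊕ Q₀) → (M, f, N) is a projective cover in the arrow category of A, where [1;0] : P₀ → P₀ ⊕ Q₀ is the canonical inclusion. -/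
/-!
The object `(P₀, inl, P₀ ⊞ Q₀)` is projective in the arrow category because a lift can be
built componentwise: lift on `P₀`, extend along `inl`, and lift separately on `Q₀`. The map is
epi since `α` is epi and `β' ≫ π = β` is epi, so anything killing `[f∘α, β']` kills `f` and
then the cokernel. For minimality, an endomorphism `θ` fixing the cover has `θ.left` fixing
`α`, hence invertible, while `θ.right` is lower triangular (it commutes with `inl`) and,
after composing with `π`, its `Q₀`-diagonal entry fixes `β`; a triangular matrix with
invertible diagonal is invertible.
-/

open CategoryTheory CategoryTheory.Limits

/-- `p : P ⟶ M` is a projective cover: `P` is projective, `p` is an epimorphism and `p` is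
right minimal (every endomorphism `θ` of `P` with `θ ≫ p = p` is an isomorphism). -/
def IsProjectiveCover {C : Type*} [Category C] {P M : C} (p : P ⟶ M) : Prop :=
  Projective P ∧ Epi p ∧ ∀ θ : P ⟶ P, θ ≫ p = p → IsIso θ

namespace CategoryTheory.Biprod

variable {C : Type*} [Category C] [Preadditive C] [HasBinaryBiproducts C]

lemma isIso_ofComponents_of_isIso {X₁ X₂ Y₁ Y₂ : C} (f₁₁ : X₁ ⟶ Y₁) (f₂₁ : X₂ ⟶ Y₁)
    (f₂₂ : X₂ ⟶ Y₂) [IsIso f₁₁] [IsIso f₂₂] : IsIso (ofComponents f₁₁ 0 f₂₁ f₂₂) :=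
  ⟨ofComponents (inv f₁₁) 0 (-(inv f₂₂ ≫ f₂₁ ≫ inv f₁₁)) (inv f₂₂), by
    constructor <;> ext <;> simp [ofComponents]⟩

lemma isIso_of_inl_comp_snd_eq_zero {X₁ X₂ Y₁ Y₂ : C} (φ : X₁ ⊞ X₂ ⟶ Y₁ ⊞ Y₂)
    (h₁₂ : biprod.inl ≫ φ ≫ biprod.snd = 0) [IsIso (biprod.inl ≫ φ ≫ biprod.fst)]
    [IsIso (biprod.inr ≫ φ ≫ biprod.snd)] : IsIso φ := by
  rw [← ofComponents_eq φ, h₁₂]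
  exact isIso_ofComponents_of_isIso _ _ _

end CategoryTheory.Biprod

namespace CategoryTheory.Arrow

variable {C : Type*} [Category C]

lemma epi_homMk {X Y : Arrow C} (u : X.left ⟶ Y.left) (v : X.right ⟶ Y.right)
    (w : u ≫ Y.hom = X.hom ≫ v) [Epi u] [Epi v] : Epi (homMk u v w) where
  left_cancellation g h hgh := by
    ext
    · exact (cancel_epi u).1 (congrArg Hom.left hgh)
    · exact (cancel_epi v).1 (congrArg Hom.right hgh)

/-- Test against arrows `Z ⟶ ⊤_ C`, on which a morphism is determined by its left component. -/
instance epi_left_of_epi [HasTerminal C] {X Y : Arrow C} (e : X ⟶ Y) [Epi e] : Epi e.left where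
  left_cancellation {Z} g h hgh := by
    let toTerminal (k : Y.left ⟶ Z) : Y ⟶ Arrow.mk (terminal.from Z) :=
      homMk k (terminal.from _) (terminal.hom_ext _ _)
    have : e ≫ toTerminal g = e ≫ toTerminal h := by
      ext
      · exact hgh
      · exact terminal.hom_ext _ _
    exact congrArg Hom.left ((cancel_epi e).1 this)

variable [Preadditive C]

lemma projective_mk_inl [HasTerminal C] {P Q : C} [HasBinaryBiproduct P Q]
    [Projective P] [Projective Q] : Projective (Arrow.mk (biprod.inl : P ⟶ P ⊞ Q)) where
  factors {E Y} g e _ := by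
    obtain ⟨l, hl⟩ := Projective.factors (P := P) g.left e.left
    obtain ⟨r, hr⟩ := Projective.factors (P := Q) (biprod.inr ≫ g.right) e.right
    refine ⟨homMk l (biprod.desc (l ≫ E.hom) r) (by simp), ?_⟩
    ext
    · exact hl
    · apply biprod.hom_ext'
      · change biprod.inl ≫ biprod.desc (l ≫ E.hom) r ≫ e.right = biprod.inl ≫ g.right
        rw [biprod.inl_desc_assoc, Category.assoc, ← Arrow.w e, reassoc_of% hl]
        exact Arrow.w g
      · simpa using hr

lemma isIso_of_isIso_left_of_isIso_inr_right_snd [HasBinaryBiproducts C] {P Q : C}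
    (θ : Arrow.mk (biprod.inl : P ⟶ P ⊞ Q) ⟶ Arrow.mk (biprod.inl : P ⟶ P ⊞ Q)) [IsIso θ.left]
    [IsIso (biprod.inr ≫ θ.right ≫ biprod.snd)] : IsIso θ := by
  have hsq : biprod.inl ≫ θ.right = θ.left ≫ biprod.inl := (Arrow.w_mk θ).symm
  have : IsIso (biprod.inl ≫ θ.right ≫ biprod.fst) := by
    simpa [reassoc_of% hsq] using inferInstanceAs (IsIso θ.left)
  have : IsIso θ.right :=
    Biprod.isIso_of_inl_comp_snd_eq_zero _ (by simp [reassoc_of% hsq])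
  exact isIso_of_isIso_left_of_isIso_right θ

end CategoryTheory.Arrow

namespace CategoryTheory.Limits

variable {C : Type*} [Category C] [Preadditive C] {M N X Y : C} (f : M ⟶ N) [HasCokernel f]
  (g : X ⟶ M) (h : Y ⟶ N) [HasBinaryBiproduct X Y]

lemma biprod.desc_comp_cokernel_π :
    biprod.desc (g ≫ f) h ≫ cokernel.π f = biprod.snd ≫ h ≫ cokernel.π f := by
  ext <;> simp

lemma epi_biprod_desc_comp_of_epi [Epi g] [Epi (h ≫ cokernel.π f)] :
    Epi (biprod.desc (g ≫ f) h) :=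
  Preadditive.epi_of_cancel_zero _ fun k hk => by
    have hf : f ≫ k = 0 := (cancel_epi g).1 (by simpa using biprod.inl ≫= hk)
    have hh : h ≫ k = 0 := by simpa using biprod.inr ≫= hk
    have : cokernel.desc f k hf = 0 := (cancel_epi (h ≫ cokernel.π f)).1 (by simp [hh])
    simpa using cokernel.π f ≫= this

end CategoryTheory.Limits

/-- Let `A` be an abelian category with projective covers and
`f : M ⟶ N` a morphism with `Coker f ≠ 0`.  Let `α : P₀ ⟶ M` be a projective cover of
`M`, `β : Q₀ ⟶ Coker f` a projective cover of `Coker f` and `β' : Q₀ ⟶ N` a lift of `β`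
along the cokernel projection.  Then the morphism
`(α, [f∘α, β']) : (P₀, [1;0], P₀ ⊕ Q₀) ⟶ (M, f, N)` is a projective cover in the arrow
category of `A`, where `[1;0] : P₀ ⟶ P₀ ⊞ Q₀` is the canonical inclusion. -/
theorem projective_cover_in_arrow_category
    {A : Type*} [Category A] [Abelian A]
    {M N : A} (f : M ⟶ N)
    {P₀ Q₀ : A} (α : P₀ ⟶ M) (hα : IsProjectiveCover α)
    (β : Q₀ ⟶ cokernel f) (hβ : IsProjectiveCover β)
    (β' : Q₀ ⟶ N) (hβ' : β' ≫ cokernel.π f = β) :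
    IsProjectiveCover
      (Arrow.homMk (f := Arrow.mk (biprod.inl : P₀ ⟶ P₀ ⊞ Q₀)) (g := Arrow.mk f)
        (u := α) (v := biprod.desc (α ≫ f) β') (by simp)) := by
  obtain ⟨hP₀, hαepi, hαmin⟩ := hα
  obtain ⟨hQ₀, hβepi, hβmin⟩ := hβ
  subst hβ'
  refine ⟨Arrow.projective_mk_inl, ?_, fun θ hθ => ?_⟩
  · have := epi_biprod_desc_comp_of_epi f α β'
    exact Arrow.epi_homMk _ _ _
  have hl : θ.left ≫ α = α := congrArg Arrow.Hom.left hθ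
  have hr : θ.right ≫ biprod.desc (α ≫ f) β' = biprod.desc (α ≫ f) β' :=
    congrArg Arrow.Hom.right hθ
  have : IsIso θ.left := hαmin _ hl
  have : IsIso (biprod.inr ≫ θ.right ≫ biprod.snd) := hβmin _ <| by
    rw [Category.assoc, Category.assoc, ← biprod.desc_comp_cokernel_π, reassoc_of% hr,
      biprod.inr_desc_assoc]
  exact Arrow.isIso_of_isIso_left_of_isIso_inr_right_snd θ
end

section
/- Let A be an abelian category with projective covers and f : M → N an epimorphism in A (so Coker(f) = 0). If α : P₀ → M is a projective cover of M, then (α, f∘α) : (P₀, 1_{P₀}, P₀) → (M, f, N) is a projective cover of the object (M, f, N) in the arrow category of A. -/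
/-!
The functor `X ↦ 𝟙 X` is left adjoint to the source functor `Arrow A ⥤ A`, and the source
functor is itself left adjoint to `X ↦ (X ⟶ ⊤_ A)`, so it preserves epimorphisms and its left
adjoint preserves projectives: `𝟙 P₀` is projective. A morphism of arrows with epimorphic
components is an epimorphism, and an endomorphism of `𝟙 P₀` is a square `(θ, θ)`, so right
minimality of `(α, α ≫ f)` reduces to that of `α`.
-/

open CategoryTheory CategoryTheory.Limits

namespace CategoryTheory.Arrow

variable {C : Type*} [Category C]

@[simps]
def idFunctor : C ⥤ Arrow C where
  obj X := Arrow.mk (𝟙 X)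
  map f := Arrow.homMk f f

def idFunctorAdjLeftFunc : (idFunctor : C ⥤ Arrow C) ⊣ leftFunc :=
  Adjunction.mkOfHomEquiv
    { homEquiv X f :=
        { toFun φ := φ.left
          invFun u := Arrow.homMk u (u ≫ f.hom) (Category.id_comp _).symm
          left_inv φ := Arrow.hom_ext _ _ rfl (φ.w.trans (Category.id_comp _))
          right_inv _ := rfl }
      homEquiv_naturality_left_symm _ _ := Arrow.hom_ext _ _ rfl (Category.assoc _ _ _) }

@[simps]
noncomputable def toTerminalFunctor [HasTerminal C] : C ⥤ Arrow C where
  obj X := Arrow.mk (terminal.from X)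
  map f := Arrow.homMk f (𝟙 _)

noncomputable def leftFuncAdjToTerminalFunctor [HasTerminal C] :
    (leftFunc : Arrow C ⥤ C) ⊣ toTerminalFunctor :=
  Adjunction.mkOfHomEquiv
    { homEquiv f X :=
        { toFun u := Arrow.homMk u (terminal.from _) (terminal.hom_ext _ _)
          invFun φ := φ.left
          left_inv _ := rfl
          right_inv _ := Arrow.hom_ext _ _ rfl (terminal.hom_ext _ _) }
      homEquiv_naturality_right _ _ := Arrow.hom_ext _ _ rfl (terminal.hom_ext _ _) }

instance [HasTerminal C] : (leftFunc : Arrow C ⥤ C).PreservesEpimorphisms :=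
  Functor.preservesEpimorphisms_of_adjunction leftFuncAdjToTerminalFunctor

theorem projective_mk_id [HasTerminal C] {P : C} (hP : Projective P) :
    Projective (Arrow.mk (𝟙 P)) :=
  idFunctorAdjLeftFunc.map_projective P hP

theorem epi_of_epi_left_of_epi_right {f g : Arrow C} (φ : f ⟶ g) [Epi φ.left] [Epi φ.right] :
    Epi φ where
  left_cancellation _ _ h := Arrow.hom_ext _ _
    ((cancel_epi φ.left).mp (congrArg CommaMorphism.left h))
    ((cancel_epi φ.right).mp (congrArg CommaMorphism.right h))

theorem isIso_of_isIso_left_of_mk_id {P Q : C} (θ : Arrow.mk (𝟙 P) ⟶ Arrow.mk (𝟙 Q))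
    [IsIso θ.left] : IsIso θ := by
  have h : θ.right = θ.left := by simpa using θ.w.symm
  have : IsIso θ.right := h ▸ inferInstance
  exact isIso_of_isIso_left_of_isIso_right θ

end CategoryTheory.Arrow

/-- Let `A` be an abelian category with projective covers and `f : M ⟶ N`
an epimorphism (so `Coker f = 0`).  If `α : P₀ ⟶ M` is a projective cover of `M`, then
`(α, f∘α) : (P₀, 1, P₀) ⟶ (M, f, N)` is a projective cover of `(M, f, N)` in the arrow
category of `A`. -/
theorem projective_cover_in_arrow_category_of_epi
    {A : Type*} [Category A] [Abelian A]
    {M N : A} (f : M ⟶ N) (hf : Epi f)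
    {P₀ : A} (α : P₀ ⟶ M) (hα : IsProjectiveCover α) :
    IsProjectiveCover
      (Arrow.homMk (f := Arrow.mk (𝟙 P₀)) (g := Arrow.mk f)
        (u := α) (v := α ≫ f) (by simp)) := by
  obtain ⟨hP, hα_epi, hα_min⟩ := hα
  refine ⟨Arrow.projective_mk_id hP, ?_, fun θ hθ => ?_⟩
  · exact @Arrow.epi_of_epi_left_of_epi_right _ _ _ _ _ hα_epi (epi_comp α f)
  · have : IsIso θ.left := hα_min θ.left (by simpa using congrArg CommaMorphism.left hθ)
    exact Arrow.isIso_of_isIso_left_of_mk_id θ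
end

section
/- Let A be an abelian category and let 0 → τM →^j E →^π M → 0 be an almost split exact sequence in A. Then the sequence 0 → (τM, 1_{τM}, τM) →^{(1_{τM}, j)} (τM, j, E) →^{(0, π)} (0, 0, M) → 0 is an almost split sequence in the arrow category of A. -/
/-!
The zero object forces the source component of a morphism `h : W ⟶ (0, 0, M)`, and the
commutative square forces `h.right = h.left ≫ W.hom` for `h : (T, 1, T) ⟶ W`; hence in both
cases `h` splits as soon as `h.right` does. For non-split `h` the component `h.right` therefore
lifts through `π` (resp. extends along `j`). In the first case `j` being a kernel of `π` provides
the source component of the lift; in the second, `h.left` itself serves.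
-/

open CategoryTheory CategoryTheory.Limits ZeroObject

section

variable {A : Type*} [Category A] [Abelian A]

/-- The morphism `(1_{τM}, j) : (τM, 1, τM) ⟶ (τM, j, E)` in the arrow category. -/
noncomputable def arrowU' {T E : A} (j : T ⟶ E) :
    Arrow.mk (𝟙 T) ⟶ Arrow.mk j :=
  Arrow.homMk (u := 𝟙 T) (v := j) (by simp)

/-- The morphism `(0, π) : (τM, j, E) ⟶ (0, 0, M)` in the arrow category. -/
noncomputable def arrowP' {T E M : A} (j : T ⟶ E) (π : E ⟶ M) (w : j ≫ π = 0) :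
    Arrow.mk j ⟶ Arrow.mk (0 : (0 : A) ⟶ M) :=
  Arrow.homMk (u := (0 : T ⟶ (0 : A))) (v := π) (by simp [w])

section

variable {C : Type*} [Category C]

namespace CategoryTheory

def IsRightAlmostSplit {Y Z : C} (p : Y ⟶ Z) : Prop :=
  ∀ (W : C) (h : W ⟶ Z), ¬ IsSplitEpi h → ∃ t : W ⟶ Y, t ≫ p = h

def IsLeftAlmostSplit {X Y : C} (i : X ⟶ Y) : Prop :=
  ∀ (W : C) (h : X ⟶ W), ¬ IsSplitMono h → ∃ t : Y ⟶ W, i ≫ t = h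

namespace Arrow

lemma mono_of_mono_left_of_mono_right {f g : Arrow C} (sq : f ⟶ g) [Mono sq.left]
    [Mono sq.right] : Mono sq where
  right_cancellation a b h := by
    ext
    · rw [← cancel_mono sq.left, ← comp_left, ← comp_left, h]
    · rw [← cancel_mono sq.right, ← comp_right, ← comp_right, h]

lemma epi_of_epi_left_of_epi_right_s17 {f g : Arrow C} (sq : f ⟶ g) [Epi sq.left]
    [Epi sq.right] : Epi sq where
  left_cancellation a b h := by
    ext
    · rw [← cancel_epi sq.left, ← comp_left, ← comp_left, h]
    · rw [← cancel_epi sq.right, ← comp_right, ← comp_right, h]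

lemma isSplitEpi_right {f g : Arrow C} (sq : f ⟶ g) [IsSplitEpi sq] : IsSplitEpi sq.right :=
  inferInstanceAs (IsSplitEpi (rightFunc.map sq))

lemma isSplitEpi_of_isSplitEpi_right {W X : Arrow C} (hX : IsZero X.left) (sq : W ⟶ X)
    (hr : IsSplitEpi sq.right) : IsSplitEpi sq :=
  IsSplitEpi.mk'
    { section_ := homMk (hX.to_ W.left) (section_ sq.right) (hX.eq_of_src _ _)
      id := by
        ext
        · exact hX.eq_of_src _ _
        · exact IsSplitEpi.id sq.right }

lemma isSplitMono_of_isSplitMono_right {T : C} {W : Arrow C} (sq : mk (𝟙 T) ⟶ W)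
    (hr : IsSplitMono sq.right) : IsSplitMono sq :=
  IsSplitMono.mk'
    { retraction := homMk (W.hom ≫ retraction sq.right) (retraction sq.right)
      id := by
        ext
        · simp
        · exact IsSplitMono.id sq.right }

end Arrow

end CategoryTheory

@[simp]
lemma arrowU'_left {T E : C} (j : T ⟶ E) : (arrowU' j).left = 𝟙 T := rfl

@[simp]
lemma arrowU'_right {T E : C} (j : T ⟶ E) : (arrowU' j).right = j := rfl

lemma mono_arrowU' {T E : C} (j : T ⟶ E) [Mono j] : Mono (arrowU' j) :=
  have : Mono (arrowU' j).left := inferInstanceAs (Mono (𝟙 T))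
  have : Mono (arrowU' j).right := inferInstanceAs (Mono j)
  Arrow.mono_of_mono_left_of_mono_right _

lemma isLeftAlmostSplit_arrowU' {T E : C} (j : T ⟶ E) (hj : IsLeftAlmostSplit j) :
    IsLeftAlmostSplit (arrowU' j) := by
  intro W h hh
  obtain ⟨t, ht⟩ := hj W.right h.right
    (fun hr => hh (Arrow.isSplitMono_of_isSplitMono_right h hr))
  exact ⟨Arrow.homMk h.left t (by simp [ht]), by ext <;> simp [ht]⟩

end

@[simp]
lemma arrowP'_right {T E M : A} (j : T ⟶ E) (π : E ⟶ M) (w : j ≫ π = 0) :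
    (arrowP' j π w).right = π := rfl

lemma epi_arrowP' {T E M : A} (j : T ⟶ E) (π : E ⟶ M) (w : j ≫ π = 0) [Epi π] :
    Epi (arrowP' j π w) :=
  have : Epi (arrowP' j π w).left := epi_of_target_iso_zero _ (Iso.refl _)
  have : Epi (arrowP' j π w).right := inferInstanceAs (Epi π)
  Arrow.epi_of_epi_left_of_epi_right_s17 _

lemma isRightAlmostSplit_arrowP' {T E M : A} (j : T ⟶ E) (π : E ⟶ M) (w : j ≫ π = 0)
    (hS : (ShortComplex.mk j π w).Exact) [Mono j] (hπ : IsRightAlmostSplit π) :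
    IsRightAlmostSplit (arrowP' j π w) := by
  intro W h hh
  obtain ⟨t, ht⟩ := hπ W.right h.right
    (fun hr => hh (Arrow.isSplitEpi_of_isSplitEpi_right (isZero_zero A) h hr))
  have hW : (W.hom ≫ t) ≫ π = 0 := by
    simpa [ht] using (Arrow.w h).symm
  refine ⟨Arrow.homMk (hS.lift (W.hom ≫ t) hW) t (hS.lift_f _ _), ?_⟩
  ext
  · exact (isZero_zero A).eq_of_tgt _ _
  · simpa using ht

lemma shortExact_id_zero (T : A) :
    (ShortComplex.mk (𝟙 T) (0 : T ⟶ (0 : A)) (by simp)).ShortExact :=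
  (ShortComplex.Splitting.ofIsIsoOfIsZero _ (by dsimp; infer_instance) (isZero_zero A)).shortExact

/-- If `0 → τM →ʲ E →^π M → 0` is an almost split exact sequence in the
abelian category `A`, then `0 → (τM,1,τM) →⁽¹'ʲ⁾ (τM,j,E) →⁽⁰,π⁾ (0,0,M) → 0` is an
almost split sequence in the arrow category of `A` (exactness being componentwise). -/
theorem almost_split_sequence_in_arrow_category_starting_at_identity
    {T E M : A} (j : T ⟶ E) (π : E ⟶ M) (w : j ≫ π = 0)
    (hses : (ShortComplex.mk j π w).ShortExact)
    (hnonsplit : ¬ IsSplitEpi π)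
    (hras : ∀ (W : A) (h : W ⟶ M), ¬ IsSplitEpi h → ∃ t : W ⟶ E, t ≫ π = h)
    (hlas : ∀ (W : A) (h : T ⟶ W), ¬ IsSplitMono h → ∃ t : E ⟶ W, j ≫ t = h) :
    Mono (arrowU' j) ∧ Epi (arrowP' j π w) ∧
    -- exactness of the sequence in the arrow category, i.e. componentwise exactness:
    (ShortComplex.mk (𝟙 T) (0 : T ⟶ (0 : A)) (by simp)).ShortExact ∧
    (ShortComplex.mk j π w).ShortExact ∧
    -- the sequence does not split:
    ¬ IsSplitEpi (arrowP' j π w) ∧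
    -- `(0, π)` is right almost split:
    (∀ (W : Arrow A) (h : W ⟶ Arrow.mk (0 : (0 : A) ⟶ M)), ¬ IsSplitEpi h →
      ∃ t : W ⟶ Arrow.mk j, t ≫ arrowP' j π w = h) ∧
    -- `(1, j)` is left almost split:
    (∀ (W : Arrow A) (h : Arrow.mk (𝟙 T) ⟶ W), ¬ IsSplitMono h →
      ∃ t : Arrow.mk j ⟶ W, arrowU' j ≫ t = h) := by
  have : Mono j := hses.mono_f
  have : Epi π := hses.epi_g
  refine ⟨mono_arrowU' j, epi_arrowP' j π w,
    shortExact_id_zero T, hses, fun _ => hnonsplit (Arrow.isSplitEpi_right (arrowP' j π w)),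
    isRightAlmostSplit_arrowP' j π w hses.exact hras, isLeftAlmostSplit_arrowU' j hlas⟩

end
end
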